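/- Let H be a Hilbert space with a bilinear form a that is bounded (constant Λ) and coercive (constant λ) on a closed subspace V. Let b be another bounded bilinear form on H, coercive with constant λ on V, and let u ∈ H. Define the two Galerkin projections P_a u, P_b u ∈ V by a(P_a u, v) = a(u, v) and b(P_b u, v) = a(u, v) for all v ∈ V. Suppose |b(w,v) - a(w,v)| ≤ ε‖w‖‖v‖ for all w, v ∈ H. Then ‖P_a u - P_b u‖ ≤ (ε/λ)‖P_a u‖. -/

import Mathlib

/-!
Galerkin orthogonality gives `b (P_b u - P_a u) v = (a - b) (P_a u) v` on `V`; testing with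
`v = P_b u - P_a u` and using the coercivity of `b` yields
`λ ‖P_b u - P_a u‖² ≤ ε ‖P_a u‖ ‖P_b u - P_a u‖`.
-/

theorem le_div_of_mul_sq_le_mul {x c lam : ℝ} (hlam : 0 < lam) (hc : 0 ≤ c) (hx : 0 ≤ x)
    (h : lam * x ^ 2 ≤ c * x) : x ≤ c / lam := by
  rcases hx.eq_or_lt with rfl | hx
  · positivity
  · rw [le_div_iff₀ hlam]
    exact le_of_mul_le_mul_right (by linarith) hx

section Galerkin

variable {E : Type*} [SeminormedAddCommGroup E] [NormedSpace ℝ E]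
  {a b : E →ₗ[ℝ] E →ₗ[ℝ] ℝ} {V : Submodule ℝ E} {u Pa Pb : E}

theorem galerkin_sub_apply (hPadef : ∀ v ∈ V, a Pa v = a u v)
    (hPbdef : ∀ v ∈ V, b Pb v = a u v) {v : E} (hv : v ∈ V) :
    b (Pb - Pa) v = a Pa v - b Pa v := by
  rw [map_sub, LinearMap.sub_apply, hPbdef v hv, hPadef v hv]

theorem norm_galerkin_sub_le {lam ε : ℝ} (hlam : 0 < lam) (hε : 0 ≤ ε)
    (hbcoer : ∀ v ∈ V, b v v ≥ lam * ‖v‖ ^ 2) (hPa : Pa ∈ V) (hPb : Pb ∈ V)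
    (hPadef : ∀ v ∈ V, a Pa v = a u v) (hPbdef : ∀ v ∈ V, b Pb v = a u v)
    (hclose : ∀ w v : E, |b w v - a w v| ≤ ε * ‖w‖ * ‖v‖) :
    ‖Pb - Pa‖ ≤ ε / lam * ‖Pa‖ := by
  set e := Pb - Pa
  have he : e ∈ V := V.sub_mem hPb hPa
  have hupper : b e e ≤ ε * ‖Pa‖ * ‖e‖ := calc
    b e e = -(b Pa e - a Pa e) := by rw [galerkin_sub_apply hPadef hPbdef he]; ring
    _ ≤ |b Pa e - a Pa e| := neg_le_abs _
    _ ≤ ε * ‖Pa‖ * ‖e‖ := hclose Pa e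
  rw [div_mul_eq_mul_div]
  exact le_div_of_mul_sq_le_mul hlam (by positivity) (norm_nonneg e)
    ((hbcoer e he).trans hupper)

end Galerkin

theorem stmt_13_general {H : Type*} [NormedAddCommGroup H] [InnerProductSpace ℝ H]
    (a b : H →ₗ[ℝ] H →ₗ[ℝ] ℝ) (lam ε : ℝ) (hlam : 0 < lam)
    (hε : 0 ≤ ε)
    (V : Submodule ℝ H)
    (hbcoer : ∀ v ∈ V, b v v ≥ lam * ‖v‖^2)
    (u Pa Pb : H) (hPa : Pa ∈ V) (hPb : Pb ∈ V)
    (hPadef : ∀ v ∈ V, a Pa v = a u v)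
    (hPbdef : ∀ v ∈ V, b Pb v = a u v)
    (hclose : ∀ w v : H, |b w v - a w v| ≤ ε * ‖w‖ * ‖v‖) :
    ‖Pa - Pb‖ ≤ (ε / lam) * ‖Pa‖ := by
  rw [norm_sub_rev]
  exact norm_galerkin_sub_le hlam hε hbcoer hPa hPb hPadef hPbdef hclose

theorem stmt_13 {H : Type*} [NormedAddCommGroup H] [InnerProductSpace ℝ H]
    [CompleteSpace H]
    (a b : H →ₗ[ℝ] H →ₗ[ℝ] ℝ) (lam Lam ε : ℝ) (hlam : 0 < lam) (hLam : 0 < Lam)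
    (hε : 0 ≤ ε)
    (habdd : ∀ u v : H, |a u v| ≤ Lam * ‖u‖ * ‖v‖)
    (hbbdd : ∀ u v : H, |b u v| ≤ Lam * ‖u‖ * ‖v‖)
    (V : Submodule ℝ H) (hV : IsClosed (V : Set H))
    (hacoer : ∀ v ∈ V, a v v ≥ lam * ‖v‖^2)
    (hbcoer : ∀ v ∈ V, b v v ≥ lam * ‖v‖^2)
    (u Pa Pb : H) (hPa : Pa ∈ V) (hPb : Pb ∈ V)
    (hPadef : ∀ v ∈ V, a Pa v = a u v)
    (hPbdef : ∀ v ∈ V, b Pb v = a u v)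
    (hclose : ∀ w v : H, |b w v - a w v| ≤ ε * ‖w‖ * ‖v‖) :
    ‖Pa - Pb‖ ≤ (ε / lam) * ‖Pa‖ :=
  stmt_13_general a b lam ε hlam hε V hbcoer u Pa Pb hPa hPb hPadef hPbdef hclose
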